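/- arXiv:1306.5427 — 3 statements merged into one kernel-verified Lean document; each statement's English description precedes it below -/
import Mathlib

section
/- Let R = ℂ[A₁,A₂,B₁,p₁,p₂,p₃]/(B₁(A₁−A₂) − p₂p₃) be the coordinate ring of the hypersurface X ⊂ 𝔸⁶, and let the group ℂ* × {±1} act on R through its action on X by (c,s)·(A₁,A₂,B₁,p₁,p₂,p₃) = (A₁, A₂, csB₁, c⁻¹p₁, sp₂, cp₃). Then every (ℂ* × {±1})-invariant element of R lies in the ℂ-subalgebra of R generated by the classes of A₁, A₂, b₁₂ := p₂², b₀₁ := p₁p₃, b₀₂ := p₂B₁p₁ and b₀₃ := B₁²p₁². -/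
/-!
The action is diagonal: `(c, s)` multiplies the monomial with exponent `d` by
`c ^ (d₂ + d₅ - d₃) * s ^ (d₂ + d₄)` (indices of `A₁, A₂, B₁, p₁, p₂, p₃` are `0, …, 5`).
Lift an invariant class to a polynomial `f`. Comparing `s = 1` with `s = -1` kills the monomials
of odd parity, and since a Laurent polynomial in `c` with vector coefficients that is constant on
`ℂ*` has no terms of nonzero degree, only the monomials of `c`-weight `0` survive: their classes
already sum to the given element. Such a monomial is
`A₁^a A₂^b (p₁p₃)^{d₅} (B₁p₁)^{d₂} p₂^{d₄}` with `d₂ + d₄` even, a product of the generators.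
-/

open MvPolynomial

noncomputable section

/-- The polynomial ring `ℂ[A₁,A₂,B₁,p₁,p₂,p₃]`, with variables `X 0, …, X 5`
corresponding to `A₁, A₂, B₁, p₁, p₂, p₃`. -/
abbrev P6 := MvPolynomial (Fin 6) ℂ

/-- The defining relation `B₁(A₁ - A₂) - p₂p₃` of the hypersurface `X ⊂ 𝔸⁶`. -/
def relC2 : P6 := X 2 * (X 0 - X 1) - X 4 * X 5

/-- The ideal generated by the defining relation; `R = P6 ⧸ IC2`. -/
def IC2 : Ideal P6 := Ideal.span {relC2}

/-- The action of `(c,s) ∈ ℂ* × {±1}` on the coordinate ring, induced by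
`(c,s)·(A₁,A₂,B₁,p₁,p₂,p₃) = (A₁, A₂, csB₁, c⁻¹p₁, sp₂, cp₃)`. -/
def actC2 (c s : ℂ) : P6 →ₐ[ℂ] P6 :=
  aeval ![X 0, X 1, C (c * s) * X 2, C c⁻¹ * X 3, C s * X 4, C c * X 5]

section CharacterSums

variable {K M ι : Type*} [Field K] [AddCommGroup M] [Module K M]

theorem sum_filter_eq_of_forall_sum_pow_smul_eq [Infinite K] (T : Finset ι) (e : ι → ℕ)
    (m : ι → M) (n : ℕ) (r : M) (h : ∀ c : K, c ≠ 0 → ∑ i ∈ T, c ^ e i • m i = c ^ n • r) :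
    ∑ i ∈ T with e i = n, m i = r := by
  rw [← sub_eq_zero, ← Module.forall_dual_apply_eq_zero_iff K]
  intro φ
  set p : Polynomial K :=
    ∑ i ∈ T, Polynomial.monomial (e i) (φ (m i)) - Polynomial.monomial n (φ r)
  have hp : p = 0 := by
    refine Polynomial.eq_zero_of_infinite_isRoot p
      ((Set.finite_singleton 0).infinite_compl.mono fun c hc => ?_)
    have := congrArg φ (h c hc)
    simp only [map_sum, map_smul, smul_eq_mul] at this
    simp [p, Polynomial.eval_finsetSum, this, mul_comm]
  simpa [p, Polynomial.finsetSum_coeff, Polynomial.coeff_monomial, Finset.sum_ite, map_sum]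
    using congrArg (Polynomial.coeff · n) hp

theorem sum_filter_eq_of_forall_sum_zpow_smul_eq [Infinite K] (T : Finset ι) (w : ι → ℤ)
    (m : ι → M) (r : M) (h : ∀ c : K, c ≠ 0 → ∑ i ∈ T, c ^ w i • m i = r) :
    ∑ i ∈ T with w i = 0, m i = r := by
  set N := T.sup fun i => (-w i).toNat
  have hN : ∀ i ∈ T, 0 ≤ w i + N := fun i hi => by
    have : (-w i).toNat ≤ N := Finset.le_sup (f := fun i => (-w i).toNat) hi
    omega
  have key := sum_filter_eq_of_forall_sum_pow_smul_eq T (fun i => (w i + N).toNat) m N r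
    fun c hc => by
      rw [← h c hc, Finset.smul_sum]
      refine Finset.sum_congr rfl fun i hi => ?_
      rw [smul_smul, ← zpow_natCast, Int.toNat_of_nonneg (hN i hi), zpow_add₀ hc, zpow_natCast,
        mul_comm]
  rwa [Finset.filter_congr (q := fun i => w i = 0) fun i hi => by have := hN i hi; omega] at key

theorem sum_filter_even_eq [NeZero (2 : K)] (T : Finset ι) (k : ι → ℕ) (m : ι → M) (r : M)
    (h₁ : ∑ i ∈ T, m i = r) (h₂ : ∑ i ∈ T, (-1 : K) ^ k i • m i = r) :
    ∑ i ∈ T with Even (k i), m i = r := by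
  refine smul_right_injective M (two_ne_zero (α := K)) ?_
  calc (2 : K) • ∑ i ∈ T with Even (k i), m i
      = ∑ i ∈ T, (1 + (-1 : K) ^ k i) • m i := by
        rw [Finset.smul_sum, Finset.sum_filter]
        refine Finset.sum_congr rfl fun i _ => ?_
        rcases Nat.even_or_odd (k i) with hk | hk
        · rw [if_pos hk, hk.neg_one_pow, one_add_one_eq_two]
        · rw [if_neg (Nat.not_even_iff_odd.mpr hk), hk.neg_one_pow, add_neg_cancel, zero_smul]
    _ = (2 : K) • r := by
        simp only [add_smul, one_smul, Finset.sum_add_distrib, h₁, h₂, two_smul]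

end CharacterSums

theorem aeval_C_mul_X_monomial {σ R : Type*} [CommSemiring R] (l : σ → R) (d : σ →₀ ℕ)
    (a : R) :
    aeval (fun i => C (l i) * X i) (monomial d a) =
      C (d.prod fun i k => l i ^ k) * monomial d a := by
  rw [aeval_monomial, monomial_eq]
  simp only [mul_pow, Finsupp.prod_mul, algebraMap_eq, ← C_pow, ← map_finsuppProd]
  exact mul_left_comm _ _ _

def weightC2 (d : Fin 6 →₀ ℕ) : ℤ := d 2 + d 5 - d 3

theorem actC2_monomial {c : ℂ} (hc : c ≠ 0) (s : ℂ) (d : Fin 6 →₀ ℕ) (a : ℂ) :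
    actC2 c s (monomial d a) = (s ^ (d 2 + d 4) * c ^ weightC2 d) • monomial d a := by
  have : actC2 c s = aeval fun i => C (![1, 1, c * s, c⁻¹, s, c] i) * X i := by
    rw [actC2]; congr 1; funext i; fin_cases i <;> simp
  rw [this, aeval_C_mul_X_monomial, smul_eq_C_mul, Finsupp.prod_fintype _ _ (by simp),
    Fin.prod_univ_six, weightC2, zpow_sub₀ hc, zpow_add₀ hc]
  congr 2
  simp only [Matrix.cons_val, zpow_natCast, inv_pow]
  field_simp
  ring

theorem actC2_apply {c : ℂ} (hc : c ≠ 0) (s : ℂ) (f : P6) :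
    actC2 c s f =
      ∑ d ∈ f.support, (s ^ (d 2 + d 4) * c ^ weightC2 d) • monomial d (coeff d f) := by
  conv_lhs => rw [f.as_sum, map_sum]
  simp only [actC2_monomial hc]

theorem pow_mul_pow_mem_of_even_add {R A : Type*} [CommSemiring R] [CommSemiring A]
    [Algebra R A] {S : Subalgebra R A} {x y : A} (hx : x ^ 2 ∈ S) (hy : y ^ 2 ∈ S) (hxy : x * y ∈ S)
    {a b : ℕ} (h : Even (a + b)) : x ^ a * y ^ b ∈ S := by
  rcases Nat.even_or_odd a with ⟨k, rfl⟩ | ⟨k, rfl⟩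
  · obtain ⟨l, rfl⟩ : Even b := (Nat.even_add.mp h).mp ⟨k, rfl⟩
    rw [← two_mul, ← two_mul, pow_mul, pow_mul]
    exact mul_mem (pow_mem hx k) (pow_mem hy l)
  · obtain ⟨l, rfl⟩ : Odd b := by rw [Nat.even_add] at h; grind
    have : x ^ (2 * k + 1) * y ^ (2 * l + 1) = x * y * (x ^ 2) ^ k * (y ^ 2) ^ l := by ring
    rw [this]
    exact mul_mem (mul_mem hxy (pow_mem hx k)) (pow_mem hy l)

def invariantGensC2 : Set P6 :=
  {X 0, X 1, X 4 ^ 2, X 3 * X 5, X 4 * X 2 * X 3, X 2 ^ 2 * X 3 ^ 2}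

theorem monomial_mem_adjoin_invariantGensC2 {d : Fin 6 →₀ ℕ} (hw : weightC2 d = 0)
    (he : Even (d 2 + d 4)) (a : ℂ) : monomial d a ∈ Algebra.adjoin ℂ invariantGensC2 := by
  have mem : ∀ g ∈ invariantGensC2, g ∈ Algebra.adjoin ℂ invariantGensC2 :=
    fun g hg => Algebra.subset_adjoin hg
  have hd : d 3 = d 2 + d 5 := by rw [weightC2] at hw; omega
  have hmon : monomial d a = C a * (X 0 ^ d 0 * X 1 ^ d 1 * (X 3 * X 5) ^ d 5 *
      ((X 2 * X 3) ^ d 2 * X 4 ^ d 4)) := by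
    rw [monomial_eq, Finsupp.prod_fintype _ _ (by simp), Fin.prod_univ_six, hd]
    ring
  rw [hmon]
  refine mul_mem (Subalgebra.algebraMap_mem _ a) (mul_mem (mul_mem (mul_mem ?_ ?_) ?_) ?_)
  · exact pow_mem (mem _ (by simp [invariantGensC2])) _
  · exact pow_mem (mem _ (by simp [invariantGensC2])) _
  · exact pow_mem (mem _ (by simp [invariantGensC2])) _
  · refine pow_mul_pow_mem_of_even_add (mem _ ?_) (mem _ ?_) (mem _ ?_) he
    · simp [invariantGensC2, mul_pow]
    · simp [invariantGensC2]
    · rw [show X 2 * X 3 * X 4 = (X 4 * X 2 * X 3 : P6) by ring]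
      simp [invariantGensC2]

/-- Every `(ℂ* × {±1})`-invariant element of `R = ℂ[A₁,A₂,B₁,p₁,p₂,p₃]/(B₁(A₁-A₂) - p₂p₃)`
lies in the `ℂ`-subalgebra generated by the classes of
`A₁, A₂, p₂², p₁p₃, p₂B₁p₁, B₁²p₁²`. -/
theorem stmt2 (r : P6 ⧸ IC2)
    (hinv : ∀ (c : ℂˣ) (s : ℂ), s = 1 ∨ s = -1 →
      ∀ f : P6, Ideal.Quotient.mk IC2 f = r →
        Ideal.Quotient.mk IC2 (actC2 (c : ℂ) s f) = r) :
    r ∈ Algebra.adjoin ℂ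
      ({Ideal.Quotient.mk IC2 (X 0), Ideal.Quotient.mk IC2 (X 1),
        Ideal.Quotient.mk IC2 (X 4 ^ 2), Ideal.Quotient.mk IC2 (X 3 * X 5),
        Ideal.Quotient.mk IC2 (X 4 * X 2 * X 3),
        Ideal.Quotient.mk IC2 (X 2 ^ 2 * X 3 ^ 2)} : Set (P6 ⧸ IC2)) := by
  set π := Ideal.Quotient.mkₐ ℂ IC2
  obtain ⟨f, rfl⟩ := Ideal.Quotient.mkₐ_surjective ℂ IC2 r
  set m : (Fin 6 →₀ ℕ) → P6 ⧸ IC2 := fun d => π (monomial d (coeff d f))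
  have hchar : ∀ c : ℂ, c ≠ 0 → ∀ s : ℂ, s = 1 ∨ s = -1 →
      ∑ d ∈ f.support, (s ^ (d 2 + d 4) * c ^ weightC2 d) • m d = π f := fun c hc s hs => by
    simpa only [Units.val_mk0, actC2_apply hc, ← Ideal.Quotient.mkₐ_eq_mk ℂ, map_sum, map_smul]
      using hinv (Units.mk0 c hc) s hs f rfl
  have heven : ∀ c : ℂ, c ≠ 0 →
      ∑ d ∈ f.support with Even (d 2 + d 4), c ^ weightC2 d • m d = π f :=
    fun c hc => sum_filter_even_eq _ _ _ _ (by simpa using hchar c hc 1 (.inl rfl))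
      (by simpa only [mul_smul] using hchar c hc (-1) (.inr rfl))
  have hgens : Algebra.adjoin ℂ ({Ideal.Quotient.mk IC2 (X 0), Ideal.Quotient.mk IC2 (X 1),
        Ideal.Quotient.mk IC2 (X 4 ^ 2), Ideal.Quotient.mk IC2 (X 3 * X 5),
        Ideal.Quotient.mk IC2 (X 4 * X 2 * X 3),
        Ideal.Quotient.mk IC2 (X 2 ^ 2 * X 3 ^ 2)} : Set (P6 ⧸ IC2)) =
      (Algebra.adjoin ℂ invariantGensC2).map π := by
    simp [AlgHom.map_adjoin, invariantGensC2, Set.image_insert_eq, π]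
  rw [hgens, ← sum_filter_eq_of_forall_sum_zpow_smul_eq _ _ _ _ heven, Finset.filter_filter]
  refine Subalgebra.sum_mem _ fun d hd => Subalgebra.mem_map.mpr ⟨_, ?_, rfl⟩
  obtain ⟨-, he, hw⟩ := Finset.mem_filter.mp hd
  exact monomial_mem_adjoin_invariantGensC2 hw he _
end
end

section
/- Let R = ℂ[A₀,A₁,B₀,p₀,p₁]/(B₀(A₁−A₀) + p₁p₀) with the {±1} × {±1}-action given by (s₁,s₂)·(A₀,A₁,B₀,p₀,p₁) = (A₀, A₁, s₁s₂B₀, s₁p₀, s₂p₁). The ℂ-algebra homomorphism from ℂ[x₁,x₂,y₀,y₁,t] to the subring of {±1}×{±1}-invariants of R sending x₁ ↦ A₀, x₂ ↦ A₁, y₀ ↦ p₀², y₁ ↦ p₁², t ↦ B₀² is surjective, and its kernel is the principal ideal generated by y₁y₀ − t(x₁−x₂)². In particular the invariant ring is isomorphic to ℂ[x₁,x₂,y₀,y₁,t]/(y₁y₀ − t(x₁−x₂)²). -/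
open MvPolynomial

noncomputable section

/-- The polynomial ring `ℂ[A₀,A₁,B₀,p₀,p₁]`, with variables `X 0, …, X 4`
corresponding to `A₀, A₁, B₀, p₀, p₁`. -/
abbrev P5 := MvPolynomial (Fin 5) ℂ

/-- The defining relation `B₀(A₁ - A₀) + p₁p₀` of the hypersurface in `𝔸⁵`. -/
def relTC1 : P5 := X 2 * (X 1 - X 0) + X 4 * X 3

/-- The ideal generated by the defining relation; `R = P5 ⧸ ITC1`. -/
def ITC1 : Ideal P5 := Ideal.span {relTC1}

/-- The action of `(s₁,s₂) ∈ {±1} × {±1}` on the coordinate ring, induced by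
`(s₁,s₂)·(A₀,A₁,B₀,p₀,p₁) = (A₀, A₁, s₁s₂B₀, s₁p₀, s₂p₁)`. -/
def actTC1 (s₁ s₂ : ℂ) : P5 →ₐ[ℂ] P5 :=
  aeval ![X 0, X 1, C (s₁ * s₂) * X 2, C s₁ * X 3, C s₂ * X 4]

/-- The homomorphism `ℂ[x₁,x₂,y₀,y₁,t] → R` sending
`x₁ ↦ A₀`, `x₂ ↦ A₁`, `y₀ ↦ p₀²`, `y₁ ↦ p₁²`, `t ↦ B₀²`
(here `x₁,x₂,y₀,y₁,t` are the variables `X 0, …, X 4` of the source). -/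
def psiTC1 : MvPolynomial (Fin 5) ℂ →ₐ[ℂ] P5 ⧸ ITC1 :=
  aeval ![Ideal.Quotient.mk ITC1 (X 0), Ideal.Quotient.mk ITC1 (X 1),
    Ideal.Quotient.mk ITC1 (X 3 ^ 2), Ideal.Quotient.mk ITC1 (X 4 ^ 2),
    Ideal.Quotient.mk ITC1 (X 2 ^ 2)]

/-! A polynomial in `A₀,A₁,B₀,p₀,p₁` is invariant under the sign changes exactly when each of its
monomials has exponents of `B₀, p₀, p₁` of equal parity, i.e. it lies in
`S + B₀p₀p₁·S` with `S = ℂ[A₀,A₁,B₀²,p₀²,p₁²]`. Since `B₀p₀p₁ ≡ B₀²(A₀ - A₁)` modulo the relation,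
averaging a representative of an invariant class over the group puts the class in the image.

For the kernel, write the lift of `ψ f` as `rel·h`. The sign change `B₀ ↦ -B₀` fixes the lift and
turns `rel` into `rel' = p₁p₀ - B₀(A₁ - A₀)`, so `rel·h = rel'·h'`; dividing successively by the
primes `B₀, p₀, p₁` shows `rel' ∣ h`. As `rel·rel'` is the lift of `y₁y₀ - t(x₁-x₂)²`, the lift
of `f` is that of the generator times some `c` fixed by every sign change of `B₀, p₀, p₁`, so `c`
lies in `S` and `f` is a multiple of the generator because the lift is injective. -/

namespace MvPolynomial

variable {σ R : Type*} [CommRing R]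

def scaleVars (ε : σ → R) : MvPolynomial σ R →ₐ[R] MvPolynomial σ R :=
  aeval fun i => C (ε i) * X i

lemma scaleVars_monomial [Fintype σ] (ε : σ → R) (n : σ →₀ ℕ) (c : R) :
    scaleVars ε (monomial n c) = monomial n ((∏ i, ε i ^ n i) * c) := by
  rw [scaleVars, aeval_monomial, Finsupp.prod_fintype _ _ fun _ => pow_zero _,
    monomial_eq, Finsupp.prod_fintype _ _ fun _ => pow_zero _]
  simp only [mul_pow, Finset.prod_mul_distrib, ← map_pow, ← map_prod, algebraMap_eq, C_mul]
  ring

lemma coeff_scaleVars [Fintype σ] (ε : σ → R) (p : MvPolynomial σ R) (m : σ →₀ ℕ) :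
    coeff m (scaleVars ε p) = (∏ i, ε i ^ m i) * coeff m p := by
  classical
  induction p using induction_on' with
  | monomial n c =>
    rw [scaleVars_monomial, coeff_monomial, coeff_monomial]
    split_ifs with h
    · rw [h]
    · rw [mul_zero]
  | add p q hp hq => rw [map_add, coeff_add, coeff_add, hp, hq, mul_add]

lemma prod_pow_eq_one_of_scaleVars_eq [Fintype σ] [IsDomain R] {ε : σ → R}
    {p : MvPolynomial σ R} (hp : scaleVars ε p = p) {m : σ →₀ ℕ} (hm : m ∈ p.support) :
    ∏ i, ε i ^ m i = 1 := by
  have := coeff_scaleVars ε p m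
  rw [hp] at this
  exact (mul_eq_right₀ (mem_support_iff.mp hm)).mp this.symm

lemma mem_of_forall_monomial_mem (S : Submodule R (MvPolynomial σ R)) {p : MvPolynomial σ R}
    (h : ∀ m ∈ p.support, monomial m 1 ∈ S) : p ∈ S := by
  rw [p.as_sum]
  refine S.sum_mem fun m hm => ?_
  simpa [smul_monomial] using S.smul_mem (coeff m p) (h m hm)

lemma not_X_dvd_X_sub_X [Nontrivial R] {i j k : σ} (hij : i ≠ j) (hjk : j ≠ k) :
    ¬ (X i : MvPolynomial σ R) ∣ X j - X k := fun h => by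
  classical
  simpa [Pi.single_apply, hij, hjk.symm] using map_dvd (eval (Pi.single j 1)) h

end MvPolynomial

def psiLift : MvPolynomial (Fin 5) ℂ →ₐ[ℂ] P5 :=
  aeval ![X 0, X 1, X 3 ^ 2, X 4 ^ 2, X 2 ^ 2]

lemma psiTC1_eq_comp : psiTC1 = (Ideal.Quotient.mkₐ ℂ ITC1).comp psiLift := by
  ext i
  fin_cases i <;> simp [psiTC1, psiLift]

lemma psiLift_injective : Function.Injective psiLift := by
  have h (q : MvPolynomial (Fin 5) ℂ) :
      aeval ![(X 0 : P5) ^ 2, X 1 ^ 2, X 2, X 3, X 4] (psiLift q) =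
        expand 2 (rename ![0, 1, 3, 4, 2] q) := by
    rw [← AlgHom.comp_apply, ← AlgHom.comp_apply]
    congr 1
    ext i
    fin_cases i <;> simp [psiLift]
  intro p q hpq
  exact rename_injective (![0, 1, 3, 4, 2] : Fin 5 → Fin 5) (by decide)
    (expand_injective two_pos (by rw [← h, ← h, hpq]))

lemma mk_psiLift (q : MvPolynomial (Fin 5) ℂ) :
    Ideal.Quotient.mk ITC1 (psiLift q) = psiTC1 q := by
  rw [psiTC1_eq_comp]
  rfl

def relConj : P5 := X 4 * X 3 - X 2 * (X 1 - X 0)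

lemma psiLift_generator : psiLift (X 3 * X 2 - X 4 * (X 0 - X 1) ^ 2) = relTC1 * relConj := by
  simp only [psiLift, relTC1, relConj, map_sub, map_mul, map_pow, aeval_X, Matrix.cons_val]
  ring

lemma relTC1_mul_relConj_ne_zero : relTC1 * relConj ≠ 0 := fun h => by
  simpa [relTC1, relConj] using congrArg (eval ![0, 0, 0, 1, 1]) h

lemma mk_X_mul_X_mul_X :
    Ideal.Quotient.mk ITC1 (X 2 * X 3 * X 4) = psiTC1 (X 4 * (X 0 - X 1)) := by
  rw [psiTC1_eq_comp, AlgHom.comp_apply, Ideal.Quotient.mkₐ_eq_mk, Ideal.Quotient.eq, ITC1,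
    Ideal.mem_span_singleton]
  exact ⟨X 2, by simp [psiLift, relTC1]; ring⟩

def negB : P5 →ₐ[ℂ] P5 := scaleVars ![1, 1, -1, 1, 1]

lemma actTC1_eq_scaleVars (s₁ s₂ : ℂ) : actTC1 s₁ s₂ = scaleVars ![1, 1, s₁ * s₂, s₁, s₂] := by
  ext i
  fin_cases i <;> simp [actTC1, scaleVars]

lemma actTC1_psiLift {s₁ s₂ : ℂ} (hs₁ : s₁ = 1 ∨ s₁ = -1) (hs₂ : s₂ = 1 ∨ s₂ = -1)
    (q : MvPolynomial (Fin 5) ℂ) : actTC1 s₁ s₂ (psiLift q) = psiLift q := by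
  rw [← AlgHom.comp_apply]
  congr 1
  refine algHom_ext fun i => ?_
  obtain rfl | rfl := hs₁ <;> obtain rfl | rfl := hs₂ <;>
    fin_cases i <;> simp [actTC1, psiLift, -aeval_eq_bind₁]

lemma negB_psiLift (q : MvPolynomial (Fin 5) ℂ) : negB (psiLift q) = psiLift q := by
  rw [← AlgHom.comp_apply]
  congr 1
  ext i
  fin_cases i <;> simp [negB, scaleVars, psiLift]

lemma actTC1_relTC1 (s₁ s₂ : ℂ) : actTC1 s₁ s₂ relTC1 = C (s₁ * s₂) * relTC1 := by
  simp only [actTC1, relTC1, map_add, map_sub, map_mul, aeval_X, Matrix.cons_val]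
  ring

lemma negB_relTC1 : negB relTC1 = relConj := by
  simp only [negB, scaleVars, relTC1, relConj, map_add, map_sub, map_mul, aeval_X,
    Matrix.cons_val, C_neg, C_1]
  ring

lemma mod_two_eq_of_actTC1_eq {p : P5} (h₁ : actTC1 (-1) 1 p = p) (h₂ : actTC1 1 (-1) p = p)
    {m : Fin 5 →₀ ℕ} (hm : m ∈ p.support) : m 3 % 2 = m 2 % 2 ∧ m 4 % 2 = m 2 % 2 := by
  rw [actTC1_eq_scaleVars] at h₁ h₂
  have e₁ := prod_pow_eq_one_of_scaleVars_eq h₁ hm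
  have e₂ := prod_pow_eq_one_of_scaleVars_eq h₂ hm
  simp only [Fin.prod_univ_five, Matrix.cons_val, one_pow, one_mul, mul_one, mul_neg] at e₁ e₂
  rw [← pow_add, neg_one_pow_eq_one_iff_even (by norm_num), Nat.even_iff] at e₁ e₂
  omega

lemma mod_two_eq_zero_of_negB_eq {p : P5} (h : negB p = p) {m : Fin 5 →₀ ℕ}
    (hm : m ∈ p.support) : m 2 % 2 = 0 := by
  have e := prod_pow_eq_one_of_scaleVars_eq h hm
  simp only [Fin.prod_univ_five] at e
  simpa [neg_one_pow_eq_one_iff_even (R := ℂ) (by norm_num), Nat.even_iff] using e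

lemma monomial_eq_mul_psiLift (m : Fin 5 →₀ ℕ) (h₃ : m 3 % 2 = m 2 % 2) (h₄ : m 4 % 2 = m 2 % 2) :
    monomial m (1 : ℂ) = (X 2 * X 3 * X 4) ^ (m 2 % 2) *
      psiLift (X 0 ^ m 0 * X 1 ^ m 1 * X 2 ^ (m 3 / 2) * X 3 ^ (m 4 / 2) * X 4 ^ (m 2 / 2)) := by
  rw [monomial_eq, Finsupp.prod_fintype _ _ fun _ => pow_zero _, Fin.prod_univ_five]
  simp only [psiLift, map_mul, map_pow, aeval_X, Matrix.cons_val, C_1, one_mul]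
  conv_lhs => rw [← Nat.mod_add_div (m 2) 2, ← Nat.mod_add_div (m 3) 2,
    ← Nat.mod_add_div (m 4) 2, h₃, h₄]
  ring

lemma mem_range_psiLift_of_invariant {p : P5} (h₁ : actTC1 (-1) 1 p = p)
    (h₂ : actTC1 1 (-1) p = p) (h₃ : negB p = p) : p ∈ psiLift.range := by
  refine mem_of_forall_monomial_mem (Subalgebra.toSubmodule psiLift.range) fun m hm => ?_
  obtain ⟨e₃, e₄⟩ := mod_two_eq_of_actTC1_eq h₁ h₂ hm
  have e₂ := mod_two_eq_zero_of_negB_eq h₃ hm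
  rw [monomial_eq_mul_psiLift m e₃ e₄, e₂, pow_zero, one_mul]
  exact ⟨_, rfl⟩

lemma mk_mem_range_psiTC1_of_invariant {p : P5} (h₁ : actTC1 (-1) 1 p = p)
    (h₂ : actTC1 1 (-1) p = p) : Ideal.Quotient.mk ITC1 p ∈ psiTC1.range := by
  refine mem_of_forall_monomial_mem ((Subalgebra.toSubmodule psiTC1.range).comap
    (Ideal.Quotient.mkₐ ℂ ITC1).toLinearMap) (p := p) (fun m hm => ?_)
  obtain ⟨e₃, e₄⟩ := mod_two_eq_of_actTC1_eq h₁ h₂ hm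
  simp only [Submodule.mem_comap, AlgHom.toLinearMap_apply, Ideal.Quotient.mkₐ_eq_mk,
    Subalgebra.mem_toSubmodule]
  rw [monomial_eq_mul_psiLift m e₃ e₄, map_mul, map_pow, mk_X_mul_X_mul_X, mk_psiLift]
  exact Subalgebra.mul_mem _ (Subalgebra.pow_mem _ (AlgHom.mem_range_self _ _) _)
    (AlgHom.mem_range_self _ _)

def actUnits (g : ℤˣ × ℤˣ) : P5 →ₐ[ℂ] P5 := actTC1 (g.1 : ℤ) (g.2 : ℤ)

lemma actUnits_mul (g h : ℤˣ × ℤˣ) (p : P5) :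
    actUnits (g * h) p = actUnits g (actUnits h p) := by
  rw [← AlgHom.comp_apply]
  congr 1
  refine algHom_ext fun i => ?_
  fin_cases i <;> simp [actUnits, actTC1, -aeval_eq_bind₁] <;> ring

lemma actUnits_sum_actUnits (h : ℤˣ × ℤˣ) (f : P5) :
    actUnits h (∑ g, actUnits g f) = ∑ g, actUnits g f := by
  simp only [map_sum, ← actUnits_mul]
  exact Equiv.sum_comp (Equiv.mulLeft h) fun g => actUnits g f

lemma mem_range_psiTC1_of_invariant {r : P5 ⧸ ITC1}
    (hr : ∀ s₁ s₂ : ℂ, (s₁ = 1 ∨ s₁ = -1) → (s₂ = 1 ∨ s₂ = -1) →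
      ∀ f : P5, Ideal.Quotient.mk ITC1 f = r → Ideal.Quotient.mk ITC1 (actTC1 s₁ s₂ f) = r) :
    r ∈ psiTC1.range := by
  obtain ⟨f, rfl⟩ := Ideal.Quotient.mk_surjective r
  have hunit (u : ℤˣ) : ((u : ℤ) : ℂ) = 1 ∨ ((u : ℤ) : ℂ) = -1 := by
    rcases Int.units_eq_one_or u with rfl | rfl <;> simp
  have hsum :
      Ideal.Quotient.mk ITC1 (∑ g, actUnits g f) = (4 : ℂ) • Ideal.Quotient.mk ITC1 f := by
    rw [map_sum, Finset.sum_congr rfl fun g _ => hr _ _ (hunit g.1) (hunit g.2) f rfl,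
      Finset.sum_const, Finset.card_univ, Fintype.card_prod, Fintype.card_units_int,
      ← Nat.cast_smul_eq_nsmul ℂ]
    norm_num
  have h₁ : actTC1 (-1) 1 (∑ g, actUnits g f) = ∑ g, actUnits g f := by
    simpa [actUnits] using actUnits_sum_actUnits (-1, 1) f
  have h₂ : actTC1 1 (-1) (∑ g, actUnits g f) = ∑ g, actUnits g f := by
    simpa [actUnits] using actUnits_sum_actUnits (1, -1) f
  have hmem := mk_mem_range_psiTC1_of_invariant h₁ h₂
  rw [hsum] at hmem
  simpa using psiTC1.range.smul_mem hmem (4⁻¹ : ℂ)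

lemma mk_actTC1_eq_of_mem_range {r : P5 ⧸ ITC1} (hr : r ∈ psiTC1.range) {s₁ s₂ : ℂ}
    (hs₁ : s₁ = 1 ∨ s₁ = -1) (hs₂ : s₂ = 1 ∨ s₂ = -1) {f : P5}
    (hf : Ideal.Quotient.mk ITC1 f = r) : Ideal.Quotient.mk ITC1 (actTC1 s₁ s₂ f) = r := by
  obtain ⟨q, rfl⟩ := (AlgHom.mem_range _).1 hr
  rw [← mk_psiLift, Ideal.Quotient.eq, ITC1, Ideal.mem_span_singleton] at hf ⊢
  rw [← actTC1_psiLift hs₁ hs₂ q, ← map_sub]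
  exact (dvd_mul_left _ _).trans ((actTC1_relTC1 s₁ s₂) ▸ map_dvd (actTC1 s₁ s₂) hf)

lemma relConj_dvd_of_mul_eq {h k : P5} (H : relTC1 * h = relConj * k) : relConj ∣ h := by
  unfold relTC1 relConj at *
  obtain ⟨d, hd⟩ : X 2 ∣ k - h := by
    have : (X 2 : P5) ∣ X 4 * X 3 * (k - h) :=
      ⟨(X 1 - X 0) * (h + k), by linear_combination -H⟩
    simpa [X_dvd_mul_iff] using this
  have hd' : (X 1 - X 0) * (h + k) = X 3 * (X 4 * d) :=
    mul_left_cancel₀ (X_ne_zero 2) (by linear_combination H + X 4 * X 3 * hd)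
  obtain ⟨e, he⟩ : X 3 ∣ h + k :=
    (X_prime.dvd_or_dvd ⟨_, hd'⟩).resolve_left (not_X_dvd_X_sub_X (by decide) (by decide))
  have he' : (X 1 - X 0) * e = X 4 * d :=
    mul_left_cancel₀ (X_ne_zero 3) (by linear_combination hd' - (X 1 - X 0) * he)
  obtain ⟨c, hc⟩ : X 4 ∣ e :=
    (X_prime.dvd_or_dvd ⟨_, he'⟩).resolve_left (not_X_dvd_X_sub_X (by decide) (by decide))
  have hdc : d = (X 1 - X 0) * c :=
    mul_left_cancel₀ (X_ne_zero 4) (by linear_combination -he' + (X 1 - X 0) * hc)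
  have h2 : (C 2⁻¹ : P5) * 2 = 1 := by
    rw [← map_ofNat C 2, ← C_mul, inv_mul_cancel₀ two_ne_zero, C_1]
  exact ⟨C 2⁻¹ * c, by linear_combination (-h) * h2 + C 2⁻¹ * (he - hd + X 3 * hc - X 2 * hdc)⟩

lemma exists_psiLift_eq_mul_of_mem {f : MvPolynomial (Fin 5) ℂ} (hf : psiLift f ∈ ITC1) :
    ∃ c, psiLift f = relTC1 * relConj * c := by
  obtain ⟨h, hh⟩ := Ideal.mem_span_singleton.1 hf
  have H : relTC1 * h = relConj * negB h := by
    rw [← hh, ← negB_relTC1, ← map_mul, ← hh, negB_psiLift]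
  obtain ⟨c, rfl⟩ := relConj_dvd_of_mul_eq H
  exact ⟨c, by rw [hh, mul_assoc]⟩

lemma ker_psiTC1 : RingHom.ker psiTC1 = Ideal.span {X 3 * X 2 - X 4 * (X 0 - X 1) ^ 2} := by
  refine le_antisymm (fun f hf => ?_) ?_
  · rw [RingHom.mem_ker, ← mk_psiLift, Ideal.Quotient.eq_zero_iff_mem] at hf
    obtain ⟨c, hc⟩ := exists_psiLift_eq_mul_of_mem hf
    rw [← psiLift_generator] at hc
    have hfix (τ : P5 →ₐ[ℂ] P5) (hτ : ∀ q, τ (psiLift q) = psiLift q) : τ c = c := by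
      refine mul_left_cancel₀ (psiLift_generator ▸ relTC1_mul_relConj_ne_zero) ?_
      rw [← hc, ← hτ f, hc, map_mul, hτ]
    obtain ⟨m, hm⟩ := (AlgHom.mem_range _).1 <| mem_range_psiLift_of_invariant
      (hfix _ (actTC1_psiLift (Or.inr rfl) (Or.inl rfl)))
      (hfix _ (actTC1_psiLift (Or.inl rfl) (Or.inr rfl))) (hfix _ negB_psiLift)
    exact Ideal.mem_span_singleton'.2 ⟨m, psiLift_injective (by rw [map_mul, hm, hc, mul_comm])⟩
  · rw [Ideal.span_le, Set.singleton_subset_iff, SetLike.mem_coe, RingHom.mem_ker, ← mk_psiLift,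
      psiLift_generator, Ideal.Quotient.eq_zero_iff_mem]
    exact Ideal.mul_mem_right _ _ (Ideal.subset_span rfl)

/-- The map `ℂ[x₁,x₂,y₀,y₁,t] → R` above surjects onto the ring of `{±1} × {±1}`-invariants
of `R` (its range is exactly the set of invariant elements), and its kernel is the principal
ideal generated by `y₁y₀ - t(x₁-x₂)²`; hence the invariant ring is
`ℂ[x₁,x₂,y₀,y₁,t]/(y₁y₀ - t(x₁-x₂)²)`. -/
theorem stmt4 :
    (∀ r : P5 ⧸ ITC1,
      (∀ s₁ s₂ : ℂ, (s₁ = 1 ∨ s₁ = -1) → (s₂ = 1 ∨ s₂ = -1) →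
        ∀ f : P5, Ideal.Quotient.mk ITC1 f = r →
          Ideal.Quotient.mk ITC1 (actTC1 s₁ s₂ f) = r)
      ↔ r ∈ psiTC1.range) ∧
    RingHom.ker psiTC1 = Ideal.span {X 3 * X 2 - X 4 * (X 0 - X 1) ^ 2} :=
  ⟨fun _ => ⟨mem_range_psiTC1_of_invariant,
    fun hr _ _ hs₁ hs₂ _ hf => mk_actTC1_eq_of_mem_range hr hs₁ hs₂ hf⟩, ker_psiTC1⟩

end
end

section
/- A selfadjoint tuple (A_l, B_l, p_l, q_l)_{l∈ℤ/Nℤ} satisfying the chainsaw equations A_{l+1}B_l − B_lA_l + p_{l+1}q_l = 0 for all l ∈ ℤ/Nℤ is stable if and only if it is costable. -/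
open Matrix

noncomputable section

variable (N : ℕ) [NeZero N]

/-- The "quadratic" symmetric bilinear form on `V = ⊕_{l ∈ ℤ/N} ℂ^{d_l}`, pairing the
`l`-th and `(-l)`-th summands by the standard pairing (via `d(-l) = d(l)`). -/
def PhiV (d : ZMod N → ℕ) (hd : ∀ l, d (-l) = d l)
    (x y : ∀ l : ZMod N, Fin (d l) → ℂ) : ℂ :=
  ∑ l : ZMod N, ∑ i : Fin (d l), x l i * y (-l) (Fin.cast (hd l).symm i)

/-- The symplectic form on `W = ⊕_{l ∈ ℤ/N} ℂ·w_l` defined by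
`(w_l, w_m) = δ_{m,N-1-l}` for `0 ≤ l < N/2` (and extended antisymmetrically). -/
def PhiW (x y : ZMod N → ℂ) : ℂ :=
  ∑ l : ZMod N, (if l.val < N / 2 then (1 : ℂ) else -1) * x l * y (-1 - l)

/-- The endomorphism of `V` with blocks `A_l : V_l → V_l`. -/
def hatA (d : ZMod N → ℕ) (A : ∀ l : ZMod N, Matrix (Fin (d l)) (Fin (d l)) ℂ)
    (x : ∀ l : ZMod N, Fin (d l) → ℂ) : ∀ l : ZMod N, Fin (d l) → ℂ :=
  fun l => (A l).mulVec (x l)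

/-- The degree `+1` endomorphism of `V` with blocks `B_l : V_l → V_{l+1}`. -/
def hatB (d : ZMod N → ℕ) (B : ∀ l : ZMod N, Matrix (Fin (d (l + 1))) (Fin (d l)) ℂ)
    (x : ∀ l : ZMod N, Fin (d l) → ℂ) : ∀ l : ZMod N, Fin (d l) → ℂ :=
  fun l i => (B (l - 1)).mulVec (x (l - 1))
    (Fin.cast (congrArg d (by ring : l = l - 1 + 1)) i)

/-- The map `W → V` with blocks `p_l : W_{l-1} → V_l`. -/
def hatP (d : ZMod N → ℕ) (p : ∀ l : ZMod N, Fin (d l) → ℂ)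
    (w : ZMod N → ℂ) : ∀ l : ZMod N, Fin (d l) → ℂ :=
  fun l => w (l - 1) • p l

/-- The map `V → W` with blocks `q_l : V_l → W_l`. -/
def hatQ (d : ZMod N → ℕ) (q : ∀ l : ZMod N, Fin (d l) → ℂ)
    (x : ∀ l : ZMod N, Fin (d l) → ℂ) : ZMod N → ℂ :=
  fun l => q l ⬝ᵥ x l

/-- Selfadjointness of a tuple `(A_l, B_l, p_l, q_l)`: `A_{-l} = A_l^*`,
`B_{-l-1} = B_l^*`, `q_{-l} = p_l^*` with respect to the symmetric form on `V` and the
symplectic form on `W`. -/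
def Selfadjoint (d : ZMod N → ℕ) (hd : ∀ l, d (-l) = d l)
    (A : ∀ l : ZMod N, Matrix (Fin (d l)) (Fin (d l)) ℂ)
    (B : ∀ l : ZMod N, Matrix (Fin (d (l + 1))) (Fin (d l)) ℂ)
    (p q : ∀ l : ZMod N, Fin (d l) → ℂ) : Prop :=
  (∀ x y, PhiV N d hd (hatA N d A x) y = PhiV N d hd x (hatA N d A y)) ∧
  (∀ x y, PhiV N d hd (hatB N d B x) y = PhiV N d hd x (hatB N d B y)) ∧
  (∀ x w, PhiV N d hd x (hatP N d p w) = PhiW N (hatQ N d q x) w)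

/-- The chainsaw quiver equations `A_{l+1}B_l - B_lA_l + p_{l+1}q_l = 0`, `l ∈ ℤ/N`. -/
def Chainsaw (d : ZMod N → ℕ)
    (A : ∀ l : ZMod N, Matrix (Fin (d l)) (Fin (d l)) ℂ)
    (B : ∀ l : ZMod N, Matrix (Fin (d (l + 1))) (Fin (d l)) ℂ)
    (p q : ∀ l : ZMod N, Fin (d l) → ℂ) : Prop :=
  ∀ l : ZMod N, A (l + 1) * B l - B l * A l + vecMulVec (p (l + 1)) (q l) = 0

/-- Stability: the only collection of subspaces `V'_l ⊆ ℂ^{d_l}` with `A_lV'_l ⊆ V'_l`,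
`B_lV'_l ⊆ V'_{l+1}` and `p_l ∈ V'_l` for all `l` is `V'_l = ℂ^{d_l}`. -/
def Stable (d : ZMod N → ℕ)
    (A : ∀ l : ZMod N, Matrix (Fin (d l)) (Fin (d l)) ℂ)
    (B : ∀ l : ZMod N, Matrix (Fin (d (l + 1))) (Fin (d l)) ℂ)
    (p : ∀ l : ZMod N, Fin (d l) → ℂ) : Prop :=
  ∀ V' : ∀ l : ZMod N, Submodule ℂ (Fin (d l) → ℂ),
    (∀ l, ∀ v ∈ V' l, (A l).mulVec v ∈ V' l) →
    (∀ l, ∀ v ∈ V' l, (B l).mulVec v ∈ V' (l + 1)) →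
    (∀ l, p l ∈ V' l) → ∀ l, V' l = ⊤

/-- Costability: the only collection of subspaces `V'_l ⊆ ℂ^{d_l}` with `A_lV'_l ⊆ V'_l`,
`B_lV'_l ⊆ V'_{l+1}` and `q_l|_{V'_l} = 0` for all `l` is `V'_l = 0`. -/
def Costable (d : ZMod N → ℕ)
    (A : ∀ l : ZMod N, Matrix (Fin (d l)) (Fin (d l)) ℂ)
    (B : ∀ l : ZMod N, Matrix (Fin (d (l + 1))) (Fin (d l)) ℂ)
    (q : ∀ l : ZMod N, Fin (d l) → ℂ) : Prop :=
  ∀ V' : ∀ l : ZMod N, Submodule ℂ (Fin (d l) → ℂ),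
    (∀ l, ∀ v ∈ V' l, (A l).mulVec v ∈ V' l) →
    (∀ l, ∀ v ∈ V' l, (B l).mulVec v ∈ V' (l + 1)) →
    (∀ l, ∀ v ∈ V' l, q l ⬝ᵥ v = 0) → ∀ l, V' l = ⊥

/-!
Selfadjointness makes the componentwise orthogonal `V'^⊥` of a collection `V'`, whose `l`-th
piece is orthogonal to `V'_{-l}` under the pairing `PhiV`, again invariant under `A` and `B`,
and it exchanges the two boundary conditions: if `q` vanishes on `V'` then every `p_l` lies in
`V'^⊥`, and if every `p_l` lies in `V'` then `q` vanishes on `V'^⊥` (the latter because the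
symplectic form on `W` is nondegenerate). As the pairing of `ℂ^{d_l}` with `ℂ^{d_{-l}}` is
perfect, `V'^⊥` is everything exactly when `V'` is zero and zero exactly when `V'` is
everything, so `V' ↦ V'^⊥` turns the collections tested by costability into those tested by
stability and vice versa, with the conclusions `V' = 0` and `V'^⊥ = everything` matching.
-/

section Orthogonal

variable {N} {d : ZMod N → ℕ} (hd : ∀ l, d (-l) = d l)

lemma apply_finCast {ι α : Type*} {n : ι → ℕ} (F : ∀ k, Fin (n k) → α) {a b : ι} (h : a = b)
    (e : n a = n b) (i : Fin (n a)) : F b (Fin.cast e i) = F a i := by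
  subst h; rfl

lemma finCast_mem {ι R : Type*} [Semiring R] {n : ι → ℕ} (S : ∀ k, Submodule R (Fin (n k) → R))
    {a b : ι} (h : a = b) (e : n b = n a) {w : Fin (n a) → R} (hw : w ∈ S a) :
    (fun i => w (Fin.cast e i)) ∈ S b := by
  subst h; exact hw

def reflect (l : ZMod N) : (Fin (d (-l)) → ℂ) ≃ₗ[ℂ] (Fin (d l) → ℂ) :=
  LinearEquiv.funCongrLeft ℂ ℂ (finCongr (hd l).symm)

def pairing (l : ZMod N) : (Fin (d l) → ℂ) ≃ₗ[ℂ] Module.Dual ℂ (Fin (d (-l)) → ℂ) :=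
  (dotProductEquiv ℂ (Fin (d l))).trans (reflect hd l).dualMap

def perp (V' : ∀ l : ZMod N, Submodule ℂ (Fin (d l) → ℂ)) (l : ZMod N) :
    Submodule ℂ (Fin (d l) → ℂ) :=
  (V' (-l)).dualAnnihilator.comap (pairing hd l).toLinearMap

lemma phiV_single_left (l : ZMod N) (v : Fin (d l) → ℂ) (y : ∀ m, Fin (d m) → ℂ) :
    PhiV N d hd (Pi.single l v) y = v ⬝ᵥ reflect hd l (y (-l)) := by
  rw [PhiV, Finset.sum_eq_single l (fun m _ hm => by simp [Pi.single_eq_of_ne hm]) (by simp)]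
  simp [dotProduct, reflect]

lemma phiV_comm (x y : ∀ m, Fin (d m) → ℂ) : PhiV N d hd x y = PhiV N d hd y x := by
  refine Fintype.sum_equiv (Equiv.neg _) _ _ fun l => ?_
  refine Fintype.sum_equiv (finCongr (hd l).symm) _ _ fun i => ?_
  rw [mul_comm]
  exact congrArg _ (apply_finCast x (neg_neg l).symm (by rw [neg_neg]) i).symm

lemma eq_zero_of_phiW_eq_zero {x : ZMod N → ℂ} (h : ∀ w, PhiW N x w = 0) : x = 0 := by
  funext k
  have hk := h (Pi.single (-1 - k) 1)
  rw [PhiW, Finset.sum_eq_single k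
    (fun l _ hl => by simp [Pi.single_eq_of_ne (sub_right_injective.ne hl)]) (by simp)] at hk
  split_ifs at hk <;> simpa using hk

omit [NeZero N] in
lemma hatA_single (A : ∀ l : ZMod N, Matrix (Fin (d l)) (Fin (d l)) ℂ) (l : ZMod N)
    (v : Fin (d l) → ℂ) : hatA N d A (Pi.single l v) = Pi.single l (A l *ᵥ v) := by
  funext m
  by_cases h : m = l
  · subst h; simp [hatA]
  · simp [hatA, Pi.single_eq_of_ne h]

omit [NeZero N] in
lemma hatB_single (B : ∀ l : ZMod N, Matrix (Fin (d (l + 1))) (Fin (d l)) ℂ) (l : ZMod N)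
    (v : Fin (d l) → ℂ) : hatB N d B (Pi.single l v) = Pi.single (l + 1) (B l *ᵥ v) := by
  funext m i
  by_cases h : m = l + 1
  · subst h
    simpa [hatB] using apply_finCast (n := fun k => d (k + 1))
      (fun k => B k *ᵥ (Pi.single l v : ∀ m, Fin (d m) → ℂ) k) (add_sub_cancel_right l 1).symm _ i
  · have h' : m - 1 ≠ l := fun h' => h (by rw [← h', sub_add_cancel])
    simp [hatB, Pi.single_eq_of_ne h, Pi.single_eq_of_ne h']

omit [NeZero N] in
lemma hatB_mem {B : ∀ l : ZMod N, Matrix (Fin (d (l + 1))) (Fin (d l)) ℂ}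
    {V' : ∀ l : ZMod N, Submodule ℂ (Fin (d l) → ℂ)}
    (hB : ∀ l, ∀ v ∈ V' l, B l *ᵥ v ∈ V' (l + 1)) {y : ∀ m, Fin (d m) → ℂ}
    (hy : ∀ m, y m ∈ V' m) (m : ZMod N) : hatB N d B y m ∈ V' m :=
  finCast_mem V' (sub_add_cancel m 1) _ (hB _ _ (hy (m - 1)))

omit [NeZero N] in
lemma hatP_single (p : ∀ l : ZMod N, Fin (d l) → ℂ) (l : ZMod N) :
    hatP N d p (Pi.single (l - 1) 1) = Pi.single l (p l) := by
  funext m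
  by_cases h : m = l
  · subst h; simp [hatP]
  · simp [hatP, Pi.single_eq_of_ne h, Pi.single_eq_of_ne (sub_left_injective.ne h)]

omit [NeZero N] in
lemma pi_single_mem {V' : ∀ l : ZMod N, Submodule ℂ (Fin (d l) → ℂ)} {k : ZMod N}
    {u : Fin (d k) → ℂ} (hu : u ∈ V' k) (m : ZMod N) :
    (Pi.single k u : ∀ m, Fin (d m) → ℂ) m ∈ V' m := by
  by_cases h : m = k
  · subst h; simpa using hu
  · simp [Pi.single_eq_of_ne h]

omit [NeZero N] in
lemma mem_perp_iff_dotProduct {V' : ∀ l : ZMod N, Submodule ℂ (Fin (d l) → ℂ)} {l : ZMod N}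
    {v : Fin (d l) → ℂ} : v ∈ perp hd V' l ↔ ∀ u ∈ V' (-l), v ⬝ᵥ reflect hd l u = 0 := by
  simp [perp, pairing, Submodule.mem_dualAnnihilator]

lemma mem_perp_iff {V' : ∀ l : ZMod N, Submodule ℂ (Fin (d l) → ℂ)} {l : ZMod N}
    {v : Fin (d l) → ℂ} :
    v ∈ perp hd V' l ↔ ∀ y, (∀ m, y m ∈ V' m) → PhiV N d hd (Pi.single l v) y = 0 := by
  simp_rw [mem_perp_iff_dotProduct, phiV_single_left]
  refine ⟨fun h y hy => h _ (hy (-l)), fun h u hu => ?_⟩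
  simpa using h _ (pi_single_mem hu)

omit [NeZero N] in
lemma perp_eq_top_iff (V' : ∀ l : ZMod N, Submodule ℂ (Fin (d l) → ℂ)) (l : ZMod N) :
    perp hd V' l = ⊤ ↔ V' (-l) = ⊥ := by
  rw [perp, Submodule.comap_equiv_eq_map_symm]
  simp

omit [NeZero N] in
lemma perp_eq_bot_iff (V' : ∀ l : ZMod N, Submodule ℂ (Fin (d l) → ℂ)) (l : ZMod N) :
    perp hd V' l = ⊥ ↔ V' (-l) = ⊤ := by
  rw [perp, Submodule.comap_equiv_eq_map_symm]
  simp

lemma mulVec_A_mem_perp {A : ∀ l : ZMod N, Matrix (Fin (d l)) (Fin (d l)) ℂ}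
    (hA : ∀ x y, PhiV N d hd (hatA N d A x) y = PhiV N d hd x (hatA N d A y))
    {V' : ∀ l : ZMod N, Submodule ℂ (Fin (d l) → ℂ)} (hV : ∀ l, ∀ v ∈ V' l, A l *ᵥ v ∈ V' l) :
    ∀ l, ∀ v ∈ perp hd V' l, A l *ᵥ v ∈ perp hd V' l := by
  intro l v hv
  rw [mem_perp_iff] at hv ⊢
  intro y hy
  rw [← hatA_single, hA]
  exact hv _ fun m => hV m _ (hy m)

lemma mulVec_B_mem_perp {B : ∀ l : ZMod N, Matrix (Fin (d (l + 1))) (Fin (d l)) ℂ}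
    (hB : ∀ x y, PhiV N d hd (hatB N d B x) y = PhiV N d hd x (hatB N d B y))
    {V' : ∀ l : ZMod N, Submodule ℂ (Fin (d l) → ℂ)}
    (hV : ∀ l, ∀ v ∈ V' l, B l *ᵥ v ∈ V' (l + 1)) :
    ∀ l, ∀ v ∈ perp hd V' l, B l *ᵥ v ∈ perp hd V' (l + 1) := by
  intro l v hv
  rw [mem_perp_iff] at hv ⊢
  intro y hy
  rw [← hatB_single, hB]
  exact hv _ (hatB_mem hV hy)

lemma p_mem_perp {p q : ∀ l : ZMod N, Fin (d l) → ℂ}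
    (hpq : ∀ x w, PhiV N d hd x (hatP N d p w) = PhiW N (hatQ N d q x) w)
    {V' : ∀ l : ZMod N, Submodule ℂ (Fin (d l) → ℂ)} (hq : ∀ l, ∀ v ∈ V' l, q l ⬝ᵥ v = 0)
    (l : ZMod N) : p l ∈ perp hd V' l := by
  rw [mem_perp_iff]
  intro y hy
  have hQ : hatQ N d q y = 0 := funext fun m => hq m _ (hy m)
  rw [← hatP_single, phiV_comm, hpq, hQ]
  simp [PhiW]

lemma q_dotProduct_eq_zero_of_mem_perp {p q : ∀ l : ZMod N, Fin (d l) → ℂ}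
    (hpq : ∀ x w, PhiV N d hd x (hatP N d p w) = PhiW N (hatQ N d q x) w)
    {V' : ∀ l : ZMod N, Submodule ℂ (Fin (d l) → ℂ)} (hp : ∀ l, p l ∈ V' l) :
    ∀ l, ∀ v ∈ perp hd V' l, q l ⬝ᵥ v = 0 := by
  intro l v hv
  have hQ : hatQ N d q (Pi.single l v) = 0 := eq_zero_of_phiW_eq_zero fun w => by
    rw [← hpq]
    exact (mem_perp_iff hd).1 hv _ fun m => Submodule.smul_mem _ _ (hp m)
  simpa [hatQ] using congrFun hQ l

end Orthogonal

theorem stmt11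
    (d : ZMod N → ℕ) (hd : ∀ l, d (-l) = d l)
    (A : ∀ l : ZMod N, Matrix (Fin (d l)) (Fin (d l)) ℂ)
    (B : ∀ l : ZMod N, Matrix (Fin (d (l + 1))) (Fin (d l)) ℂ)
    (p q : ∀ l : ZMod N, Fin (d l) → ℂ)
    (hsa : Selfadjoint N d hd A B p q) :
    Stable N d A B p ↔ Costable N d A B q := by
  obtain ⟨hA, hB, hpq⟩ := hsa
  constructor
  · intro hst V' hAV hBV hqV m
    have htop := hst (perp hd V') (mulVec_A_mem_perp hd hA hAV) (mulVec_B_mem_perp hd hB hBV)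
      (p_mem_perp hd hpq hqV) (-m)
    rwa [perp_eq_top_iff, neg_neg] at htop
  · intro hco V' hAV hBV hpV m
    have hbot := hco (perp hd V') (mulVec_A_mem_perp hd hA hAV) (mulVec_B_mem_perp hd hB hBV)
      (q_dotProduct_eq_zero_of_mem_perp hd hpq hpV) (-m)
    rwa [perp_eq_bot_iff, neg_neg] at hbot
end
end
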